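/- Fix integers a ≥ 3 and ℓ ≥ 0. Let G be a finite simple graph, S ⊆ V(G) with |S| ≥ a, f : S → ℕ with f(s) ≥ 1 for all s ∈ S, and A ⊆ S with |A| = a such that every vertex of A is adjacent in G to two leaves (degree-1 vertices) of G, neither of which lies in S. Let G' be obtained by affixing the spoon gadget Sp(ℓ,a) to G at A, and let v denote the path head of the gadget. Then, for the fragile power domination process on G' with multiset placement M(S,f), Pr_q(v is observed) = Σ_{w∈A} ( q^{f(w)} · Π_{u∈A∖{w}}(1 − q^{f(u)}) ) + Π_{w∈A}(1 − q^{f(w)}); moreover for every vertex v' of the appended path on ℓ vertices, Pr_q(v' is observed) = Pr_q(v is observed). -/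

import Mathlib

open Polynomial

/-- The closed neighborhood `N[S]` of a set of vertices. -/
def closedNbhd {V : Type*} (G : SimpleGraph V) (S : Set V) : Set V :=
  ⋃ v ∈ S, insert v (G.neighborSet v)

/-- A set `B` is closed under the zero forcing step: whenever `x ∈ B` has exactly one
neighbor `y` outside `B`, then `y` is already in `B`. -/
def PDClosed {V : Type*} (G : SimpleGraph V) (B : Set V) : Prop :=
  ∀ x ∈ B, ∀ y : V, G.neighborSet x \ B = {y} → y ∈ B

/-- `Obs G S` is the set of observed vertices of the power domination process started with
PMU placement `S`: the least superset of `N[S]` closed under the zero forcing step. -/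
def Obs {V : Type*} (G : SimpleGraph V) (S : Set V) : Set V :=
  ⋂₀ {B : Set V | closedNbhd G S ⊆ B ∧ PDClosed G B}

/-- The probability (as a polynomial in the failure probability `q`) that the vertex `u`
is observed under the multiset placement `M(S,f)`:
`Pr_q(u) = Σ_{T ⊆ S, u ∈ Obs(G;T)} q^{f(S∖T)} Π_{s∈T}(1 − q^{f(s)})`.
(For `T ⊆ S` we have `f(S∖T) = f(S) − f(T)`.) -/
noncomputable def prObs {V : Type*} (G : SimpleGraph V) (S : Finset V) (f : V → ℕ)
    (u : V) : Polynomial ℝ :=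
  ∑ T ∈ S.powerset,
    Set.indicator (Obs G ↑T)
      (fun _ => X ^ ((∑ v ∈ S, f v) - ∑ v ∈ T, f v) * ∏ v ∈ T, (1 - X ^ f v)) u

/-- The vertices of the graph obtained by affixing the spoon gadget `Sp(ℓ,a)` (for `a ≥ 3`)
to a graph on `V`: the original vertices; a subdivision vertex `sub ⟨(w,i),_⟩` for every
incidence of `w ∈ A*` with the `(a−1)`-set `b_i := A* ∖ {i}` (i.e. for every pair `w ≠ i`);
the vertices `bvert i` representing the `(a−1)`-element subsets `b_i` of `A*`; the connection
vertex `conn`; the path head `head`; and the `ℓ` vertices of the appended path. -/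
inductive SpoonVert (V : Type) (a ℓ : ℕ) : Type
  | orig : V → SpoonVert V a ℓ
  | sub : {p : Fin a × Fin a // p.1 ≠ p.2} → SpoonVert V a ℓ
  | bvert : Fin a → SpoonVert V a ℓ
  | conn : SpoonVert V a ℓ
  | head : SpoonVert V a ℓ
  | path : Fin ℓ → SpoonVert V a ℓ

/-- The adjacency generating relation of the `Sp(ℓ,a)`-extension: original edges of `G`; the
subdivision vertex of the pair `(w,i)` (with `w ∈ b_i`, i.e. `w ≠ i`) is adjacent to the affix
vertex `e w` and to `bvert i`; each `bvert i` is adjacent to the connection vertex; the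
connection vertex is adjacent to the path head; and the appended path on `ℓ` vertices is
attached at the path head. -/
def spoonRel {V : Type} (G : SimpleGraph V) (a ℓ : ℕ) (e : Fin a → V) :
    SpoonVert V a ℓ → SpoonVert V a ℓ → Prop
  | SpoonVert.orig u, SpoonVert.orig v => G.Adj u v
  | SpoonVert.orig u, SpoonVert.sub p => u = e p.1.1
  | SpoonVert.sub p, SpoonVert.bvert i => p.1.2 = i
  | SpoonVert.bvert _, SpoonVert.conn => True
  | SpoonVert.conn, SpoonVert.head => True
  | SpoonVert.head, SpoonVert.path j => (j : ℕ) = 0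
  | SpoonVert.path j, SpoonVert.path j' => (j' : ℕ) = (j : ℕ) + 1
  | _, _ => False

/-- The graph obtained from `G` by affixing the spoon gadget `Sp(ℓ,a)` at
`e 0, …, e (a-1)`. -/
def spoonGraph {V : Type} (G : SimpleGraph V) (a ℓ : ℕ) (e : Fin a → V) :
    SimpleGraph (SpoonVert V a ℓ) :=
  SimpleGraph.fromRel (spoonRel G a ℓ e)

/-- Embedding of the original vertex set into the extended one. -/
def origEmb (V : Type) (a ℓ : ℕ) : V ↪ SpoonVert V a ℓ :=
  ⟨SpoonVert.orig, fun x y h => by injection h⟩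

/-- Extension of a sensor multiplicity function to the extended vertex set (no sensors are
placed on gadget vertices, so the values there are irrelevant). -/
def liftF {V : Type} (a ℓ : ℕ) (f : V → ℕ) : SpoonVert V a ℓ → ℕ
  | SpoonVert.orig v => f v
  | _ => 1


/-!
If every affix vertex but at most one, `w`, carries a working PMU, then each `(a−1)`-set vertex
`b_i` is forced by a subdivision vertex whose affix vertex (neither `i` nor `w`, which needs
`a ≥ 3`) carries a PMU; then all neighbours of `b_w` but `x` are observed, so `b_w` forces `x`,
which forces `v` and then the path. If instead two affix vertices lack a working PMU, all of `G`,
all `b_i` and the subdivision vertices at affix vertices with a PMU form a closed set: an affix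
vertex without PMU has two unobserved subdivision neighbours, and each `b_i` has `x` and a
subdivision neighbour at such an affix vertex. So `v` and the path are observed exactly when the
surviving placement contains all affix vertices but at most one; in the sum of survival weights
over these placements the vertices of `S ∖ A` contribute a factor `1`.
-/

section PowerDomination

variable {W : Type*} {H : SimpleGraph W} {S B : Set W}

theorem subset_closedNbhd : S ⊆ closedNbhd H S := fun v hv =>
  Set.mem_biUnion hv (Set.mem_insert v _)

theorem neighborSet_subset_closedNbhd {v : W} (hv : v ∈ S) :
    H.neighborSet v ⊆ closedNbhd H S := fun _ hw =>
  Set.mem_biUnion hv (Set.mem_insert_of_mem _ hw)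

theorem PDClosed.mem_of_neighborSet_subset_insert (hB : PDClosed H B) {x y : W} (hx : x ∈ B)
    (hxy : H.Adj x y) (hN : H.neighborSet x ⊆ insert y B) : y ∈ B := by
  by_contra hy
  refine hy (hB x hx y (Set.Subset.antisymm (fun z hz => ?_) ?_))
  · exact (hN hz.1).resolve_right hz.2
  · exact Set.singleton_subset_iff.2 ⟨hxy, hy⟩

theorem pdClosed_of_forall
    (h : ∀ x ∈ B, H.neighborSet x ⊆ B ∨ (H.neighborSet x \ B).Nontrivial) : PDClosed H B := by
  intro x hx y hy
  rcases h x hx with hN | hN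
  · have hy' : y ∈ H.neighborSet x \ B := hy ▸ rfl
    exact absurd (hN hy'.1) hy'.2
  · exact absurd (hy ▸ hN) Set.not_nontrivial_singleton

theorem closedNbhd_subset_obs : closedNbhd H S ⊆ Obs H S := fun _ hx _ hB => hB.1 hx

theorem obs_subset (hS : closedNbhd H S ⊆ B) (hB : PDClosed H B) : Obs H S ⊆ B :=
  Set.sInter_subset_of_mem ⟨hS, hB⟩

theorem pdClosed_obs : PDClosed H (Obs H S) := by
  intro x hx y hy B hB
  by_contra hyB
  have hxy : y ∈ H.neighborSet x \ Obs H S := hy ▸ rfl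
  refine hyB (hB.2 x (hx B hB) y (Set.Subset.antisymm (fun z hz => ?_) ?_))
  · exact hy ▸ ⟨hz.1, fun hzO => hz.2 (hzO B hB)⟩
  · exact Set.singleton_subset_iff.2 ⟨hxy.1, hyB⟩

end PowerDomination

section SurvivalWeight

open Finset

variable {α β R : Type*} [CommRing R] [DecidableEq α]

/-- The probability that exactly the vertices of `T ⊆ S` keep a working PMU when each of the
`f v` PMUs placed at `v` fails independently with probability `q`. -/
def survivalWeight (q : R) (f : α → ℕ) (S T : Finset α) : R :=
  (∏ v ∈ T, (1 - q ^ f v)) * ∏ v ∈ S \ T, q ^ f v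

theorem sum_survivalWeight (q : R) (f : α → ℕ) (S : Finset α) :
    ∑ T ∈ S.powerset, survivalWeight q f S T = 1 := by
  simp [survivalWeight, ← prod_add]

theorem survivalWeight_union {q : R} {f : α → ℕ} {A C T₁ T₂ : Finset α} (hAC : Disjoint A C)
    (hT₁ : T₁ ⊆ A) (hT₂ : T₂ ⊆ C) :
    survivalWeight q f (A ∪ C) (T₁ ∪ T₂) = survivalWeight q f A T₁ * survivalWeight q f C T₂ := by
  have hsdiff : (A ∪ C) \ (T₁ ∪ T₂) = A \ T₁ ∪ C \ T₂ := by
    ext x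
    have := disjoint_left.1 hAC
    simp only [mem_sdiff, mem_union]
    grind
  rw [survivalWeight, hsdiff, prod_union (hAC.mono hT₁ hT₂),
    prod_union (hAC.mono sdiff_subset sdiff_subset), survivalWeight, survivalWeight]
  ring

theorem survivalWeight_map [DecidableEq β] (q : R) (φ : α ↪ β) (g : β → ℕ) (S T : Finset α) :
    survivalWeight q g (S.map φ) (T.map φ) = survivalWeight q (g ∘ φ) S T := by
  rw [survivalWeight, ← Finset.map_sdiff, prod_map, prod_map]
  rfl

theorem sum_powerset_union_of_disjoint {M : Type*} [AddCommMonoid M] {s t : Finset α}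
    (hst : Disjoint s t) (F : Finset α → M) :
    ∑ T ∈ (s ∪ t).powerset, F T = ∑ T₁ ∈ s.powerset, ∑ T₂ ∈ t.powerset, F (T₁ ∪ T₂) := by
  induction t using Finset.induction_on generalizing F with
  | empty => simp
  | insert x t hx ih =>
    have hst' : Disjoint s t := hst.mono_right (subset_insert x t)
    have hxs : x ∉ s := fun h => disjoint_left.1 hst h (mem_insert_self x t)
    rw [union_insert, sum_powerset_insert (by simp [hxs, hx]), ih hst' F,
      ih hst' fun T => F (insert x T), ← sum_add_distrib]
    refine sum_congr rfl fun T₁ _ => ?_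
    simp only [sum_powerset_insert hx, union_insert]

theorem sum_ite_inter_survivalWeight (q : R) (f : α → ℕ) {A S : Finset α} (hAS : A ⊆ S)
    (P : Finset α → Prop) [DecidablePred P] :
    ∑ T ∈ S.powerset, (if P (T ∩ A) then survivalWeight q f S T else 0)
      = ∑ T ∈ A.powerset, if P T then survivalWeight q f A T else 0 := by
  rw [← union_sdiff_of_subset hAS, sum_powerset_union_of_disjoint disjoint_sdiff]
  refine sum_congr rfl fun T₁ hT₁ => ?_
  rw [mem_powerset] at hT₁
  calc ∑ T₂ ∈ (S \ A).powerset,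
        (if P ((T₁ ∪ T₂) ∩ A) then survivalWeight q f (A ∪ S \ A) (T₁ ∪ T₂) else 0)
      = ∑ T₂ ∈ (S \ A).powerset,
          (if P T₁ then survivalWeight q f A T₁ else 0) * survivalWeight q f (S \ A) T₂ := by
        refine sum_congr rfl fun T₂ hT₂ => ?_
        rw [mem_powerset] at hT₂
        have hT : (T₁ ∪ T₂) ∩ A = T₁ := by
          rw [union_inter_distrib_right, inter_eq_left.2 hT₁,
            disjoint_iff_inter_eq_empty.1 (disjoint_sdiff.mono_right hT₂).symm, union_empty]
        rw [hT, survivalWeight_union disjoint_sdiff hT₁ hT₂, ite_mul, zero_mul]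
    _ = if P T₁ then survivalWeight q f A T₁ else 0 := by
        rw [← mul_sum, sum_survivalWeight, mul_one]

theorem powerset_filter_exists_erase_subset {A : Finset α} (hA : A.Nonempty) :
    {T ∈ A.powerset | ∃ w ∈ A, A.erase w ⊆ T} = insert A (A.image A.erase) := by
  ext T
  simp only [mem_filter, mem_powerset, mem_insert, mem_image]
  constructor
  · rintro ⟨hTA, w, hw, hwT⟩
    by_cases hw' : w ∈ T
    · exact Or.inl (hTA.antisymm fun x hx =>
        if hxw : x = w then hxw ▸ hw' else hwT (mem_erase.2 ⟨hxw, hx⟩))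
    · exact Or.inr ⟨w, hw, hwT.antisymm fun x hx =>
        mem_erase.2 ⟨fun h => hw' (h ▸ hx), hTA hx⟩⟩
  · rintro (rfl | ⟨w, hw, rfl⟩)
    · obtain ⟨w, hw⟩ := hA
      exact ⟨Subset.rfl, w, hw, erase_subset _ _⟩
    · exact ⟨erase_subset _ _, w, hw, Subset.rfl⟩

theorem sum_ite_exists_erase_subset_survivalWeight (q : R) (f : α → ℕ) {A : Finset α}
    (hA : A.Nonempty) :
    ∑ T ∈ A.powerset, (if ∃ w ∈ A, A.erase w ⊆ T then survivalWeight q f A T else 0)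
      = (∑ w ∈ A, q ^ f w * ∏ u ∈ A.erase w, (1 - q ^ f u)) + ∏ w ∈ A, (1 - q ^ f w) := by
  have hA_notMem : A ∉ A.image A.erase := by
    simp only [mem_image, not_exists, not_and]
    exact fun w hw h => (erase_ssubset hw).ne h
  rw [← sum_filter, powerset_filter_exists_erase_subset hA, sum_insert hA_notMem,
    sum_image (erase_injOn A), add_comm]
  congr 1
  · exact sum_congr rfl fun w hw => by
      rw [survivalWeight, sdiff_erase_self hw, prod_singleton, mul_comm]
  · simp [survivalWeight]

end SurvivalWeight

open Classical in
theorem prObs_map {V W : Type*} [DecidableEq V] (H : SimpleGraph W)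
    (φ : V ↪ W) (S : Finset V) (g : W → ℕ) (u : W) :
    prObs H (S.map φ) g u
      = ∑ T ∈ S.powerset, if u ∈ Obs H ↑(T.map φ) then survivalWeight X (g ∘ φ) S T else 0 := by
  classical
  have hpowerset : (S.map φ).powerset = S.powerset.map (Finset.mapEmbedding φ).toEmbedding := by
    ext T
    simp only [Finset.mem_powerset, Finset.mem_map, RelEmbedding.coe_toEmbedding,
      Finset.mapEmbedding_apply, Finset.subset_map_iff, eq_comm]
  rw [prObs, hpowerset, Finset.sum_map]
  refine Finset.sum_congr rfl fun T hT => ?_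
  have hpow : (X : ℝ[X]) ^ (∑ v ∈ S.map φ, g v - ∑ v ∈ T.map φ, g v)
      = ∏ v ∈ S.map φ \ T.map φ, X ^ g v := by
    rw [Finset.prod_pow_eq_pow_sum, ← Finset.sum_sdiff (Finset.map_subset_map.2
      (Finset.mem_powerset.1 hT)), Nat.add_sub_cancel]
  rw [RelEmbedding.coe_toEmbedding, Finset.mapEmbedding_apply, Set.indicator_apply, hpow,
    mul_comm, ← survivalWeight, survivalWeight_map]

section Spoon

open SpoonVert

variable {V : Type} {a ℓ : ℕ} {G : SimpleGraph V} {e : Fin a → V}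

theorem spoonGraph_adj {x y : SpoonVert V a ℓ} : (spoonGraph G a ℓ e).Adj x y ↔
    x ≠ y ∧ (spoonRel G a ℓ e x y ∨ spoonRel G a ℓ e y x) :=
  SimpleGraph.fromRel_adj _ _ _

theorem spoonGraph_adj_orig {u : V} {z : SpoonVert V a ℓ} :
    (spoonGraph G a ℓ e).Adj (orig u) z ↔
      (∃ v, z = orig v ∧ G.Adj u v) ∨ ∃ p, z = sub p ∧ u = e p.1.1 := by
  rw [spoonGraph_adj]
  cases z <;> simp [spoonRel, SimpleGraph.adj_comm]
  aesop

theorem spoonGraph_adj_sub {p : {p : Fin a × Fin a // p.1 ≠ p.2}} {z : SpoonVert V a ℓ} :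
    (spoonGraph G a ℓ e).Adj (sub p) z ↔ z = orig (e p.1.1) ∨ z = bvert p.1.2 := by
  rw [spoonGraph_adj]
  cases z <;> simp [spoonRel, eq_comm]

theorem spoonGraph_adj_bvert {i : Fin a} {z : SpoonVert V a ℓ} :
    (spoonGraph G a ℓ e).Adj (bvert i) z ↔ (∃ p, z = sub p ∧ p.1.2 = i) ∨ z = conn := by
  rw [spoonGraph_adj]
  cases z <;> simp [spoonRel]

theorem spoonGraph_adj_conn {z : SpoonVert V a ℓ} :
    (spoonGraph G a ℓ e).Adj conn z ↔ (∃ i, z = bvert i) ∨ z = head := by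
  rw [spoonGraph_adj]
  cases z <;> simp [spoonRel]

theorem spoonGraph_adj_head {z : SpoonVert V a ℓ} :
    (spoonGraph G a ℓ e).Adj head z ↔ z = conn ∨ ∃ j : Fin ℓ, z = path j ∧ (j : ℕ) = 0 := by
  rw [spoonGraph_adj]
  cases z <;> simp [spoonRel]

theorem spoonGraph_adj_path {j : Fin ℓ} {z : SpoonVert V a ℓ} :
    (spoonGraph G a ℓ e).Adj (path j) z ↔
      (∃ j' : Fin ℓ, z = path j' ∧ ((j' : ℕ) = j + 1 ∨ (j : ℕ) = j' + 1)) ∨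
        (z = head ∧ (j : ℕ) = 0) := by
  rw [spoonGraph_adj]
  cases z <;> simp [spoonRel, Fin.ext_iff]
  grind

variable {T : Finset V} {i₀ : Fin a}

theorem sub_mem_obs_spoonGraph {p : {p : Fin a × Fin a // p.1 ≠ p.2}} (hp : e p.1.1 ∈ T) :
    sub p ∈ Obs (spoonGraph G a ℓ e) ↑(T.map (origEmb V a ℓ)) :=
  closedNbhd_subset_obs <| neighborSet_subset_closedNbhd (Finset.mem_map_of_mem _ hp) <|
    spoonGraph_adj_orig.2 (Or.inr ⟨p, rfl, rfl⟩)

theorem bvert_mem_obs_spoonGraph (ha : 3 ≤ a) (hi₀ : ∀ j ≠ i₀, e j ∈ T) (i : Fin a) :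
    bvert i ∈ Obs (spoonGraph G a ℓ e) ↑(T.map (origEmb V a ℓ)) := by
  obtain ⟨w, hwi₀, hwi⟩ := Fin.exists_ne_and_ne_of_two_lt i₀ i (by omega)
  have hw : e w ∈ T := hi₀ w hwi₀
  refine pdClosed_obs.mem_of_neighborSet_subset_insert
    (sub_mem_obs_spoonGraph (p := ⟨(w, i), hwi⟩) hw) (spoonGraph_adj_sub.2 (Or.inr rfl))
    fun z hz => ?_
  rcases spoonGraph_adj_sub.1 hz with rfl | rfl
  · exact Or.inr (closedNbhd_subset_obs (subset_closedNbhd (Finset.mem_map_of_mem _ hw)))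
  · exact Or.inl rfl

theorem conn_mem_obs_spoonGraph (ha : 3 ≤ a) (hi₀ : ∀ j ≠ i₀, e j ∈ T) :
    conn ∈ Obs (spoonGraph G a ℓ e) ↑(T.map (origEmb V a ℓ)) := by
  refine pdClosed_obs.mem_of_neighborSet_subset_insert (bvert_mem_obs_spoonGraph ha hi₀ i₀)
    (spoonGraph_adj_bvert.2 (Or.inr rfl)) fun z hz => ?_
  rcases spoonGraph_adj_bvert.1 hz with ⟨p, rfl, hp⟩ | rfl
  · exact Or.inr (sub_mem_obs_spoonGraph (hi₀ _ fun h => p.2 (h.trans hp.symm)))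
  · exact Or.inl rfl

theorem head_mem_obs_spoonGraph (ha : 3 ≤ a) (hi₀ : ∀ j ≠ i₀, e j ∈ T) :
    head ∈ Obs (spoonGraph G a ℓ e) ↑(T.map (origEmb V a ℓ)) := by
  refine pdClosed_obs.mem_of_neighborSet_subset_insert (conn_mem_obs_spoonGraph ha hi₀)
    (spoonGraph_adj_conn.2 (Or.inr rfl)) fun z hz => ?_
  rcases spoonGraph_adj_conn.1 hz with ⟨i, rfl⟩ | rfl
  · exact Or.inr (bvert_mem_obs_spoonGraph ha hi₀ i)
  · exact Or.inl rfl

theorem path_mem_obs_spoonGraph (ha : 3 ≤ a) (hi₀ : ∀ j ≠ i₀, e j ∈ T) (j : Fin ℓ) :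
    path j ∈ Obs (spoonGraph G a ℓ e) ↑(T.map (origEmb V a ℓ)) := by
  have hhead := head_mem_obs_spoonGraph (ℓ := ℓ) (G := G) ha hi₀
  suffices ∀ k, ∀ j : Fin ℓ, (j : ℕ) ≤ k →
      path j ∈ Obs (spoonGraph G a ℓ e) ↑(T.map (origEmb V a ℓ)) from this j j le_rfl
  intro k
  induction k with
  | zero =>
    intro j hj
    refine pdClosed_obs.mem_of_neighborSet_subset_insert hhead
      (spoonGraph_adj_head.2 (Or.inr ⟨j, rfl, by omega⟩)) fun z hz => ?_
    rcases spoonGraph_adj_head.1 hz with rfl | ⟨j', rfl, hj'⟩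
    · exact Or.inr (conn_mem_obs_spoonGraph ha hi₀)
    · exact Or.inl (congrArg path (Fin.ext (by omega)))
  | succ k ih =>
    intro j hj
    rcases Nat.lt_or_ge k j with hkj | hjk
    · let j₀ : Fin ℓ := ⟨k, hkj.trans j.2⟩
      refine pdClosed_obs.mem_of_neighborSet_subset_insert (ih j₀ le_rfl)
        (spoonGraph_adj_path.2 (Or.inl ⟨j, rfl, Or.inl (by simp [j₀]; omega)⟩)) fun z hz => ?_
      rcases spoonGraph_adj_path.1 hz with ⟨j', rfl, hj' | hj'⟩ | ⟨rfl, -⟩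
      · exact Or.inl (congrArg path (Fin.ext (by simp [j₀] at hj'; omega)))
      · exact Or.inr (ih j' (by simp [j₀] at hj'; omega))
      · exact Or.inr hhead
    · exact ih j hjk

/-- A closed superset of `N[T]` avoiding the connection vertex and everything beyond it, as
soon as two affix vertices lie outside `T`. -/
def spoonBlockingSet (ℓ : ℕ) (e : Fin a → V) (T : Finset V) : Set (SpoonVert V a ℓ) :=
  {x | match x with
    | orig _ => True
    | sub p => e p.1.1 ∈ T
    | bvert _ => True
    | _ => False}

theorem closedNbhd_subset_spoonBlockingSet :
    closedNbhd (spoonGraph G a ℓ e) ↑(T.map (origEmb V a ℓ)) ⊆ spoonBlockingSet ℓ e T := by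
  intro x hx
  simp only [closedNbhd, Finset.coe_map, Set.mem_image, Finset.mem_coe, Set.iUnion_exists,
    Set.biUnion_and', Set.iUnion_iUnion_eq_right, Set.mem_iUnion] at hx
  obtain ⟨t, ht, rfl | hx⟩ := hx
  · trivial
  · rcases spoonGraph_adj_orig.1 hx with ⟨v, rfl, -⟩ | ⟨p, rfl, rfl⟩
    · trivial
    · exact ht

theorem pdClosed_spoonBlockingSet (ha : 3 ≤ a) {i₀ i₁ : Fin a} (h₀₁ : i₀ ≠ i₁) (h₀ : e i₀ ∉ T)
    (h₁ : e i₁ ∉ T) : PDClosed (spoonGraph G a ℓ e) (spoonBlockingSet ℓ e T) := by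
  refine pdClosed_of_forall fun x hx => ?_
  match x with
  | orig u =>
    by_cases hu : ∃ i, u = e i ∧ e i ∉ T
    · obtain ⟨i, rfl, hi⟩ := hu
      obtain ⟨j, hji, -⟩ := Fin.exists_ne_and_ne_of_two_lt i i (by omega)
      obtain ⟨k, hki, hkj⟩ := Fin.exists_ne_and_ne_of_two_lt i j (by omega)
      refine Or.inr (Set.nontrivial_of_mem_mem_ne (x := sub ⟨(i, j), hji.symm⟩)
        (y := sub ⟨(i, k), hki.symm⟩) ⟨spoonGraph_adj_orig.2 (Or.inr ⟨_, rfl, rfl⟩), hi⟩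
        ⟨spoonGraph_adj_orig.2 (Or.inr ⟨_, rfl, rfl⟩), hi⟩ ?_)
      simp [hkj.symm]
    · refine Or.inl fun z hz => ?_
      rcases spoonGraph_adj_orig.1 hz with ⟨v, rfl, -⟩ | ⟨p, rfl, rfl⟩
      · trivial
      · by_contra hp
        exact hu ⟨p.1.1, rfl, hp⟩
  | sub p =>
    refine Or.inl fun z hz => ?_
    rcases spoonGraph_adj_sub.1 hz with rfl | rfl <;> trivial
  | bvert i =>
    obtain ⟨m, hmi, hm⟩ : ∃ m, m ≠ i ∧ e m ∉ T := by
      by_cases h : i₀ = i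
      · exact ⟨i₁, fun h' => h₀₁ (h.trans h'.symm), h₁⟩
      · exact ⟨i₀, h, h₀⟩
    exact Or.inr (Set.nontrivial_of_mem_mem_ne (x := sub ⟨(m, i), hmi⟩) (y := conn)
      ⟨spoonGraph_adj_bvert.2 (Or.inl ⟨_, rfl, rfl⟩), hm⟩
      ⟨spoonGraph_adj_bvert.2 (Or.inr rfl), id⟩ (by simp))

theorem exists_forall_ne_mem_of_mem_obs_spoonGraph (ha : 3 ≤ a) {u : SpoonVert V a ℓ}
    (hu : u ∉ spoonBlockingSet ℓ e T)
    (h : u ∈ Obs (spoonGraph G a ℓ e) ↑(T.map (origEmb V a ℓ))) :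
    ∃ i₀, ∀ j ≠ i₀, e j ∈ T := by
  by_contra hne
  push Not at hne
  obtain ⟨i₀, -, h₀⟩ := hne ⟨0, by omega⟩
  obtain ⟨i₁, h₁₀, h₁⟩ := hne i₀
  exact hu (obs_subset closedNbhd_subset_spoonBlockingSet
    (pdClosed_spoonBlockingSet ha h₁₀.symm h₀ h₁) h)

theorem head_mem_obs_spoonGraph_iff (ha : 3 ≤ a) :
    head ∈ Obs (spoonGraph G a ℓ e) ↑(T.map (origEmb V a ℓ)) ↔ ∃ i₀, ∀ j ≠ i₀, e j ∈ T :=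
  ⟨exists_forall_ne_mem_of_mem_obs_spoonGraph ha id,
    fun ⟨_, hi₀⟩ => head_mem_obs_spoonGraph ha hi₀⟩

theorem path_mem_obs_spoonGraph_iff (ha : 3 ≤ a) (j : Fin ℓ) :
    path j ∈ Obs (spoonGraph G a ℓ e) ↑(T.map (origEmb V a ℓ))
      ↔ head ∈ Obs (spoonGraph G a ℓ e) ↑(T.map (origEmb V a ℓ)) := by
  rw [head_mem_obs_spoonGraph_iff ha]
  exact ⟨exists_forall_ne_mem_of_mem_obs_spoonGraph ha id,
    fun ⟨_, hi₀⟩ => path_mem_obs_spoonGraph ha hi₀ j⟩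

end Spoon

theorem exists_forall_ne_mem_iff {V : Type} [DecidableEq V] {a : ℕ} {A T : Finset V}
    {e : Fin a ↪ V} (he : Finset.univ.map e = A) :
    (∃ i₀, ∀ j ≠ i₀, e j ∈ T) ↔ ∃ w ∈ A, A.erase w ⊆ T := by
  subst he
  simp only [Finset.mem_map, Finset.mem_univ, true_and, exists_exists_eq_and]
  refine exists_congr fun i => ⟨fun h x hx => ?_, fun h j hj => h ?_⟩
  · obtain ⟨hxi, j, -, rfl⟩ := Finset.mem_erase.1 hx |>.imp_right Finset.mem_map.1
    exact h j fun hji => hxi (hji ▸ rfl)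
  · exact Finset.mem_erase.2 ⟨e.injective.ne hj, Finset.mem_map_of_mem _ (Finset.mem_univ j)⟩

theorem liftF_comp_origEmb {V : Type} (a ℓ : ℕ) (f : V → ℕ) :
    liftF a ℓ f ∘ origEmb V a ℓ = f := rfl

theorem stmt14_general {V : Type} [DecidableEq V] (a ℓ : ℕ) (ha : 3 ≤ a)
    (G : SimpleGraph V) (S : Finset V)
    (f : V → ℕ)
    (A : Finset V) (hAS : A ⊆ S) (hAcard : A.card = a)
    (e : Fin a ↪ V) (he : Finset.univ.map e = A) :
    prObs (spoonGraph G a ℓ ⇑e) (S.map (origEmb V a ℓ)) (liftF a ℓ f) SpoonVert.head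
        = (∑ w ∈ A, X ^ f w * ∏ u ∈ A.erase w, (1 - X ^ f u))
            + ∏ w ∈ A, (1 - X ^ f w) ∧
      ∀ j : Fin ℓ,
        prObs (spoonGraph G a ℓ ⇑e) (S.map (origEmb V a ℓ)) (liftF a ℓ f)
            (SpoonVert.path j)
          = prObs (spoonGraph G a ℓ ⇑e) (S.map (origEmb V a ℓ)) (liftF a ℓ f)
              SpoonVert.head := by
  classical
  have hA : A.Nonempty := Finset.card_pos.1 (by omega)
  have hhead (T : Finset V) : SpoonVert.head ∈ Obs (spoonGraph G a ℓ e) ↑(T.map (origEmb V a ℓ))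
      ↔ ∃ w ∈ A, A.erase w ⊆ T ∩ A := by
    rw [head_mem_obs_spoonGraph_iff ha, exists_forall_ne_mem_iff he]
    simp only [Finset.subset_inter_iff, Finset.erase_subset, and_true]
  refine ⟨?_, fun j => ?_⟩
  · rw [prObs_map, liftF_comp_origEmb]
    simp_rw [hhead]
    rw [sum_ite_inter_survivalWeight X f hAS (fun T => ∃ w ∈ A, A.erase w ⊆ T),
      sum_ite_exists_erase_subset_survivalWeight X f hA]
  · simp_rw [prObs_map, path_mem_obs_spoonGraph_iff ha]

theorem stmt14 {V : Type} [Fintype V] [DecidableEq V] (a ℓ : ℕ) (ha : 3 ≤ a)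
    (G : SimpleGraph V) (S : Finset V) (hS : a ≤ S.card)
    (f : V → ℕ) (hf : ∀ v ∈ S, 1 ≤ f v)
    (A : Finset V) (hAS : A ⊆ S) (hAcard : A.card = a)
    (e : Fin a ↪ V) (he : Finset.univ.map e = A)
    (hleaves : ∀ v ∈ A, ∃ l₁ l₂ : V, l₁ ≠ l₂ ∧ l₁ ∉ S ∧ l₂ ∉ S ∧
        G.neighborSet l₁ = {v} ∧ G.neighborSet l₂ = {v}) :
    prObs (spoonGraph G a ℓ ⇑e) (S.map (origEmb V a ℓ)) (liftF a ℓ f) SpoonVert.head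
        = (∑ w ∈ A, X ^ f w * ∏ u ∈ A.erase w, (1 - X ^ f u))
            + ∏ w ∈ A, (1 - X ^ f w) ∧
      ∀ j : Fin ℓ,
        prObs (spoonGraph G a ℓ ⇑e) (S.map (origEmb V a ℓ)) (liftF a ℓ f)
            (SpoonVert.path j)
          = prObs (spoonGraph G a ℓ ⇑e) (S.map (origEmb V a ℓ)) (liftF a ℓ f)
              SpoonVert.head :=
  stmt14_general a ℓ ha G S f A hAS hAcard e he
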